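/- arXiv:2512.18415 — 5 statements merged into one kernel-verified Lean document; each statement's English description precedes it below -/
import Mathlib

section
/- Let n ≥ 1 and let S be a real 2n×2n symplectic matrix with det(S − I) ≠ 0. Then the symplectic Cayley transform M_S = ½ J (S + I)(S − I)⁻¹ is a symmetric matrix: M_S = M_Sᵀ. -/
/-! The transpose of a symplectic matrix is again symplectic, so `Sᵀ J S = J`. Expanding with this
relation gives `(Sᵀ - 1) J (S + 1) = -(Sᵀ + 1) J (S - 1)`, which, after moving the factors
`S - 1` and `(S - 1)ᵀ` to the other side, says exactly that `J (S + 1) (S - 1)⁻¹` equals its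
transpose `-(Sᵀ - 1)⁻¹ (Sᵀ + 1) J` (when `S - 1` is singular, both are `0`, the junk value
of `⁻¹`). -/

open Matrix

theorem sub_one_mul_mul_add_one_of_mul_mul_eq {α : Type*} [Ring α] {a j s : α}
    (h : a * j * s = j) : (a - 1) * (j * (s + 1)) = -((a + 1) * j) * (s - 1) := by
  have h2 : (a - 1) * (j * (s + 1)) + (a + 1) * j * (s - 1) = 2 * (a * j * s - j) := by
    noncomm_ring
  rw [h, sub_self, mul_zero] at h2
  rw [neg_mul, eq_neg_iff_add_eq_zero, h2]

namespace Matrix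

variable {m R : Type*} [Fintype m] [DecidableEq m] [CommRing R]

theorem mul_nonsing_inv_eq_nonsing_inv_mul_of_mul_eq {A B X Z : Matrix m m R}
    (hdet : A.det = B.det) (h : B * X = Z * A) : X * A⁻¹ = B⁻¹ * Z := by
  by_cases hA : IsUnit A.det
  · have hB : IsUnit B.det := hdet ▸ hA
    calc X * A⁻¹ = B⁻¹ * (B * X) * A⁻¹ := by rw [← Matrix.mul_assoc, nonsing_inv_mul _ hB, one_mul]
      _ = B⁻¹ * Z := by rw [h, Matrix.mul_assoc, Matrix.mul_assoc, mul_nonsing_inv _ hA, mul_one]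
  · have hB : ¬IsUnit B.det := hdet ▸ hA
    rw [nonsing_inv_apply_not_isUnit _ hA, nonsing_inv_apply_not_isUnit _ hB, mul_zero, zero_mul]

theorem isSymm_mul_add_one_mul_sub_one_inv {K S : Matrix m m R} (hK : Kᵀ = -K)
    (hS : Sᵀ * K * S = K) : (K * (S + 1) * (S - 1)⁻¹).IsSymm := by
  have hcomm : (S - 1)ᵀ * (K * (S + 1)) = -((Sᵀ + 1) * K) * (S - 1) := by
    rw [transpose_sub, transpose_one]
    exact sub_one_mul_mul_add_one_of_mul_mul_eq hS
  calc (K * (S + 1) * (S - 1)⁻¹)ᵀ = (S - 1)ᵀ⁻¹ * -((Sᵀ + 1) * K) := by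
        rw [transpose_mul, transpose_mul, transpose_nonsing_inv, hK, transpose_add, transpose_one,
          Matrix.mul_neg, Matrix.mul_neg]
    _ = K * (S + 1) * (S - 1)⁻¹ :=
        (mul_nonsing_inv_eq_nonsing_inv_mul_of_mul_eq (det_transpose _).symm hcomm).symm

end Matrix

namespace SymplecticGroup

variable {l R : Type*} [DecidableEq l] [CommRing R]

theorem fromBlocks_zero_one_neg_one_zero_eq_neg_J :
    (fromBlocks 0 1 (-1) 0 : Matrix (l ⊕ l) (l ⊕ l) R) = -J l R := by
  rw [J, fromBlocks_neg, neg_zero, neg_neg]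

variable [Fintype l]

theorem transpose_mul_neg_J_mul_eq {S : Matrix (l ⊕ l) (l ⊕ l) R}
    (hS : S * -J l R * Sᵀ = -J l R) : Sᵀ * -J l R * S = -J l R := by
  have hmem : S ∈ symplecticGroup l R := by
    rwa [mem_iff, ← neg_inj, ← neg_mul, ← Matrix.mul_neg]
  rw [Matrix.mul_neg, neg_mul, mem_iff'.mp hmem]

end SymplecticGroup

open SymplecticGroup in
theorem symplectic_cayley_transform_isSymm_general
    (n : ℕ)
    (S : Matrix (Fin n ⊕ Fin n) (Fin n ⊕ Fin n) ℝ)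
    (hS : S * (Matrix.fromBlocks 0 1 (-1) 0) * Sᵀ = Matrix.fromBlocks 0 1 (-1) 0) :
    ((1 / 2 : ℝ) • ((Matrix.fromBlocks 0 1 (-1) 0) * (S + 1) * (S - 1)⁻¹)).IsSymm := by
  rw [fromBlocks_zero_one_neg_one_zero_eq_neg_J] at hS ⊢
  refine IsSymm.smul (isSymm_mul_add_one_mul_sub_one_inv ?_ (transpose_mul_neg_J_mul_eq hS)) _
  rw [transpose_neg, J_transpose]

/-- For a symplectic `2n×2n` matrix `S` (i.e. `S J Sᵀ = J`) with
`det(S − I) ≠ 0`, the symplectic Cayley transform `M_S = ½ J (S + I)(S − I)⁻¹`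
is symmetric. -/
theorem symplectic_cayley_transform_isSymm
    (n : ℕ) (hn : 1 ≤ n)
    (S : Matrix (Fin n ⊕ Fin n) (Fin n ⊕ Fin n) ℝ)
    (hS : S * (Matrix.fromBlocks 0 1 (-1) 0) * Sᵀ = Matrix.fromBlocks 0 1 (-1) 0)
    (hdet : (S - 1).det ≠ 0) :
    ((1 / 2 : ℝ) • ((Matrix.fromBlocks 0 1 (-1) 0) * (S + 1) * (S - 1)⁻¹)).IsSymm :=
  symplectic_cayley_transform_isSymm_general n S hS
end

section
/- Let n ≥ 1 and let S be a real 2n×2n symplectic matrix with det(S − I) ≠ 0. Then S⁻¹ is symplectic with det(S⁻¹ − I) ≠ 0, and the symplectic Cayley transform satisfies the inversion rule M_{S⁻¹} = −M_S. -/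
/-!
The convention `J = [[0, I], [-I, 0]]` is the negative of Mathlib's `Matrix.J`, and a matrix
preserves a form iff it preserves its negative, so `S` lies in `Matrix.symplecticGroup`, whose
group structure gives `S⁻¹` symplectic and `det S` a unit. The inversion rule holds for any
invertible `S`: from `S⁻¹ + 1 = (S + 1) S⁻¹` and `S⁻¹ - 1 = (S - 1)(-S⁻¹)` one gets
`(S⁻¹ + 1)(S⁻¹ - 1)⁻¹ = -(S + 1)(S - 1)⁻¹`.
-/

open Matrix

namespace Matrix

section Symplectic

variable {l R : Type*} [DecidableEq l] [Fintype l] [CommRing R]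

theorem mem_symplecticGroup_iff_fromBlocks {S : Matrix (l ⊕ l) (l ⊕ l) R} :
    S ∈ symplecticGroup l R ↔
      S * fromBlocks 0 1 (-1) 0 * Sᵀ = fromBlocks 0 1 (-1) 0 := by
  have h_neg_J : (fromBlocks 0 1 (-1) 0 : Matrix (l ⊕ l) (l ⊕ l) R) = -J l R := by
    simp [J, fromBlocks_neg]
  rw [SymplecticGroup.mem_iff, h_neg_J, Matrix.mul_neg, Matrix.neg_mul, neg_inj]

theorem nonsing_inv_mem_symplecticGroup {S : Matrix (l ⊕ l) (l ⊕ l) R}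
    (hS : S ∈ symplecticGroup l R) : S⁻¹ ∈ symplecticGroup l R := by
  simpa only [SymplecticGroup.coe_inv'] using (⟨S, hS⟩⁻¹ : symplecticGroup l R).2

end Symplectic

section Cayley

variable {n α : Type*} [Fintype n] [DecidableEq n] [CommRing α]

theorem nonsing_inv_add_one_eq {A : Matrix n n α} (hA : IsUnit A.det) :
    A⁻¹ + 1 = (A + 1) * A⁻¹ := by
  rw [Matrix.add_mul, Matrix.one_mul, Matrix.mul_nonsing_inv A hA, add_comm]

theorem nonsing_inv_sub_one_eq {A : Matrix n n α} (hA : IsUnit A.det) :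
    A⁻¹ - 1 = (A - 1) * -A⁻¹ := by
  rw [Matrix.mul_neg, Matrix.sub_mul, Matrix.one_mul, Matrix.mul_nonsing_inv A hA, neg_sub]

theorem isUnit_det_nonsing_inv_sub_one {A : Matrix n n α} (hA : IsUnit A.det)
    (hA1 : IsUnit (A - 1).det) : IsUnit (A⁻¹ - 1).det := by
  rw [nonsing_inv_sub_one_eq hA, det_mul, det_neg]
  exact hA1.mul ((isUnit_neg_one.pow _).mul (isUnit_nonsing_inv_det_iff.2 hA))

theorem cayley_nonsing_inv {A : Matrix n n α} (hA : IsUnit A.det) :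
    (A⁻¹ + 1) * (A⁻¹ - 1)⁻¹ = -((A + 1) * (A - 1)⁻¹) := by
  have h_neg_inv : (-A⁻¹)⁻¹ = -A :=
    inv_eq_left_inv (by rw [neg_mul_neg, Matrix.mul_nonsing_inv A hA])
  calc (A⁻¹ + 1) * (A⁻¹ - 1)⁻¹ = (A + 1) * (A⁻¹ * -A) * (A - 1)⁻¹ := by
        rw [nonsing_inv_add_one_eq hA, nonsing_inv_sub_one_eq hA, Matrix.mul_inv_rev, h_neg_inv]
        simp only [Matrix.mul_assoc]
    _ = -((A + 1) * (A - 1)⁻¹) := by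
        rw [Matrix.mul_neg, Matrix.nonsing_inv_mul A hA, Matrix.mul_neg, Matrix.mul_one,
          Matrix.neg_mul]

end Cayley

end Matrix

theorem symplectic_cayley_transform_inv_general
    (n : ℕ)
    (S : Matrix (Fin n ⊕ Fin n) (Fin n ⊕ Fin n) ℝ)
    (hS : S * (Matrix.fromBlocks 0 1 (-1) 0) * Sᵀ = Matrix.fromBlocks 0 1 (-1) 0)
    (hdet : (S - 1).det ≠ 0) :
    S⁻¹ * (Matrix.fromBlocks 0 1 (-1) 0) * (S⁻¹)ᵀ = Matrix.fromBlocks 0 1 (-1) 0 ∧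
    (S⁻¹ - 1).det ≠ 0 ∧
    (1 / 2 : ℝ) • ((Matrix.fromBlocks 0 1 (-1) 0) * (S⁻¹ + 1) * (S⁻¹ - 1)⁻¹) =
      -((1 / 2 : ℝ) • ((Matrix.fromBlocks 0 1 (-1) 0) * (S + 1) * (S - 1)⁻¹)) := by
  have hS_mem : S ∈ symplecticGroup (Fin n) ℝ := mem_symplecticGroup_iff_fromBlocks.2 hS
  have hS_det : IsUnit S.det := SymplecticGroup.symplectic_det hS_mem
  refine ⟨mem_symplecticGroup_iff_fromBlocks.1 (nonsing_inv_mem_symplecticGroup hS_mem),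
    (isUnit_det_nonsing_inv_sub_one hS_det hdet.isUnit).ne_zero, ?_⟩
  rw [Matrix.mul_assoc, cayley_nonsing_inv hS_det, Matrix.mul_assoc, Matrix.mul_neg, smul_neg]

/-- If `S` is symplectic with `det(S − I) ≠ 0`, then `S⁻¹` is symplectic
with `det(S⁻¹ − I) ≠ 0`, and the symplectic Cayley transform satisfies
`M_{S⁻¹} = −M_S`. -/
theorem symplectic_cayley_transform_inv
    (n : ℕ) (hn : 1 ≤ n)
    (S : Matrix (Fin n ⊕ Fin n) (Fin n ⊕ Fin n) ℝ)
    (hS : S * (Matrix.fromBlocks 0 1 (-1) 0) * Sᵀ = Matrix.fromBlocks 0 1 (-1) 0)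
    (hdet : (S - 1).det ≠ 0) :
    S⁻¹ * (Matrix.fromBlocks 0 1 (-1) 0) * (S⁻¹)ᵀ = Matrix.fromBlocks 0 1 (-1) 0 ∧
    (S⁻¹ - 1).det ≠ 0 ∧
    (1 / 2 : ℝ) • ((Matrix.fromBlocks 0 1 (-1) 0) * (S⁻¹ + 1) * (S⁻¹ - 1)⁻¹) =
      -((1 / 2 : ℝ) • ((Matrix.fromBlocks 0 1 (-1) 0) * (S + 1) * (S - 1)⁻¹)) :=
  symplectic_cayley_transform_inv_general n S hS hdet
end

section
/- Let n ≥ 1 and let S be a real 2n×2n symplectic matrix with det(S − I) ≠ 0 and symplectic Cayley transform M_S = ½ J (S + I)(S − I)⁻¹. Then the matrix M_S − ½J is invertible and S can be recovered from M_S by the formula S = (M_S − ½J)⁻¹ (M_S + ½J). -/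
open Matrix

/-- If `S` is symplectic with `det(S − I) ≠ 0` and
`M_S = ½ J (S + I)(S − I)⁻¹` is its symplectic Cayley transform, then
`M_S − ½J` is invertible and `S = (M_S − ½J)⁻¹ (M_S + ½J)`. -/
theorem symplectic_cayley_transform_recovery
    (n : ℕ) (hn : 1 ≤ n)
    (S : Matrix (Fin n ⊕ Fin n) (Fin n ⊕ Fin n) ℝ)
    (hS : S * (Matrix.fromBlocks 0 1 (-1) 0) * Sᵀ = Matrix.fromBlocks 0 1 (-1) 0)
    (hdet : (S - 1).det ≠ 0) :
    let J : Matrix (Fin n ⊕ Fin n) (Fin n ⊕ Fin n) ℝ := Matrix.fromBlocks 0 1 (-1) 0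
    let M : Matrix (Fin n ⊕ Fin n) (Fin n ⊕ Fin n) ℝ := (1 / 2 : ℝ) • (J * (S + 1) * (S - 1)⁻¹)
    IsUnit (M - (1 / 2 : ℝ) • J).det ∧
      S = (M - (1 / 2 : ℝ) • J)⁻¹ * (M + (1 / 2 : ℝ) • J) := by
  intro J M
  have hdet' : IsUnit (S - 1).det := isUnit_iff_ne_zero.mpr hdet
  set A : Matrix (Fin n ⊕ Fin n) (Fin n ⊕ Fin n) ℝ := S - 1 with hAdef
  have hA : A * A⁻¹ = 1 := Matrix.mul_nonsing_inv A hdet'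
  have hA' : A⁻¹ * A = 1 := Matrix.nonsing_inv_mul A hdet'
  have hJJ : J * J = -1 := by
    show Matrix.fromBlocks 0 1 (-1) 0 * Matrix.fromBlocks 0 1 (-1) 0 = -1
    simp only [Matrix.fromBlocks_multiply, Matrix.zero_mul, Matrix.mul_zero,
      Matrix.one_mul, Matrix.mul_one, Matrix.mul_neg, Matrix.neg_mul, zero_add, add_zero,
      neg_zero, ← Matrix.fromBlocks_neg, ← Matrix.fromBlocks_one]
    ext (i|i) (j|j) <;>
      simp [Matrix.fromBlocks, Matrix.one_apply, Sum.elim_inl, Sum.elim_inr]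
  have hMA : M * A = (1/2:ℝ) • (J * (S+1)) := by
    show ((1/2:ℝ) • (J * (S + 1) * A⁻¹)) * A = _
    rw [Matrix.smul_mul, Matrix.mul_assoc, hA', Matrix.mul_one]
  have e1 : (M - (1/2:ℝ) • J) * A = J := by
    rw [Matrix.sub_mul, hMA, Matrix.smul_mul, ← smul_sub, ← Matrix.mul_sub]
    have h2 : (S+1) - A = (2:ℝ) • (1 : Matrix (Fin n ⊕ Fin n) (Fin n ⊕ Fin n) ℝ) := by
      rw [hAdef, two_smul]; abel
    rw [h2, mul_smul_comm, Matrix.mul_one, smul_smul]; norm_num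
  have e2 : (M + (1/2:ℝ) • J) * A = J * S := by
    rw [Matrix.add_mul, hMA, Matrix.smul_mul, ← smul_add, ← Matrix.mul_add]
    have h2 : (S+1) + A = (2:ℝ) • S := by
      rw [hAdef, two_smul]; abel
    rw [h2, mul_smul_comm, smul_smul]; norm_num
  have key1 : M - (1/2:ℝ) • J = J * A⁻¹ := by
    rw [← Matrix.mul_one (M - (1/2:ℝ) • J), ← hA, ← Matrix.mul_assoc, e1]
  have key2 : M + (1/2:ℝ) • J = J * S * A⁻¹ := by
    rw [← Matrix.mul_one (M + (1/2:ℝ) • J), ← hA, ← Matrix.mul_assoc, e2]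
  have hunit : IsUnit (M - (1/2:ℝ) • J).det := by
    apply Matrix.isUnit_det_of_right_inverse (B := A * (-J))
    rw [key1, Matrix.mul_assoc, ← Matrix.mul_assoc A⁻¹, hA', Matrix.one_mul,
      Matrix.mul_neg, hJJ, neg_neg]
  refine ⟨hunit, ?_⟩
  have hc : S * A = A * S := by rw [hAdef]; noncomm_ring
  have comm : A⁻¹ * S = S * A⁻¹ := by
    have h1 : A⁻¹ * (S * A) * A⁻¹ = A⁻¹ * (A * S) * A⁻¹ := by rw [hc]
    calc A⁻¹ * S = A⁻¹ * (S * A) * A⁻¹ := by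
          rw [Matrix.mul_assoc, Matrix.mul_assoc, hA, Matrix.mul_one]
      _ = A⁻¹ * (A * S) * A⁻¹ := h1
      _ = S * A⁻¹ := by rw [← Matrix.mul_assoc A⁻¹ A S, hA', Matrix.one_mul]
  have hMS : (M - (1/2:ℝ) • J) * S = M + (1/2:ℝ) • J := by
    rw [key1, key2, Matrix.mul_assoc, comm, Matrix.mul_assoc]
  rw [← hMS, ← Matrix.mul_assoc, Matrix.nonsing_inv_mul _ hunit, Matrix.one_mul]
end

section
/- Let n ≥ 1 and let S be a real 2n×2n symplectic matrix. Then there exist real symmetric n×n matrices P, Q, P', Q' and invertible real n×n matrices L, L' such that, writing S₁ = [[L⁻¹Q, L⁻¹], [P L⁻¹ Q − Lᵀ, L⁻¹P]] and S₂ = [[L'⁻¹Q', L'⁻¹], [P' L'⁻¹ Q' − L'ᵀ, L'⁻¹P']], one has S = S₁ S₂, det(S₁ − I) ≠ 0 and det(S₂ − I) ≠ 0. -/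
open Matrix Polynomial
open scoped ComplexOrder

variable {m : Type*} [Fintype m] [DecidableEq m]

noncomputable def detP (M N : Matrix m m ℝ) : ℝ[X] :=
  ((X : ℝ[X]) • M.map Polynomial.C - N.map Polynomial.C).det

lemma detP_eval (M N : Matrix m m ℝ) (t : ℝ) :
    (detP M N).eval t = (t • M - N).det := by
  unfold detP
  rw [show (((X : ℝ[X]) • M.map Polynomial.C - N.map Polynomial.C).det.eval t)
      = (Polynomial.evalRingHom t) ((X : ℝ[X]) • M.map Polynomial.C - N.map Polynomial.C).det from rfl,
    RingHom.map_det]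
  congr 1
  ext i j
  simp [Matrix.map_apply, RingHom.mapMatrix_apply, smul_eq_mul]
  ring

lemma detP_aevalI (M N : Matrix m m ℝ) :
    (Polynomial.aeval (Complex.I) : ℝ[X] →ₐ[ℝ] ℂ) (detP M N)
      = (Complex.I • M.map (algebraMap ℝ ℂ) - N.map (algebraMap ℝ ℂ)).det := by
  unfold detP
  rw [show ((Polynomial.aeval (Complex.I) : ℝ[X] →ₐ[ℝ] ℂ) ((X : ℝ[X]) • M.map Polynomial.C - N.map Polynomial.C).det)
      = ((Polynomial.aeval (Complex.I) : ℝ[X] →ₐ[ℝ] ℂ).toRingHom) ((X : ℝ[X]) • M.map Polynomial.C - N.map Polynomial.C).det from rfl,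
    RingHom.map_det]
  congr 1
  ext i j
  simp [Matrix.map_apply, RingHom.mapMatrix_apply, smul_eq_mul]
  ring

lemma finite_bad (M N : Matrix m m ℝ)
    (hsym : Mᵀ * N = Nᵀ * M)
    (hker : ∀ v : m → ℂ, (M.map (algebraMap ℝ ℂ)) *ᵥ v = 0 →
      (N.map (algebraMap ℝ ℂ)) *ᵥ v = 0 → v = 0) :
    {t : ℝ | (t • M - N).det = 0}.Finite := by
  set f := algebraMap ℝ ℂ with hf
  set Mc := M.map f with hMc
  set Nc := N.map f with hNc
  have hMct : Mᵀ.map f = Mcᵀ := Matrix.transpose_map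
  have hNct : Nᵀ.map f = Ncᵀ := Matrix.transpose_map
  have hsymc : Mcᵀ * Nc = Ncᵀ * Mc := by
    rw [← hMct, ← hNct, ← Matrix.map_mul, ← Matrix.map_mul, hsym]
  have hq : detP M N ≠ 0 := by
    intro h0
    have hdet0 : (Complex.I • Mc - Nc).det = 0 := by
      rw [← detP_aevalI, h0, map_zero]
    obtain ⟨v, hvne, hveq⟩ := Matrix.exists_mulVec_eq_zero_iff.mpr hdet0
    have hNv : Nc *ᵥ v = Complex.I • (Mc *ᵥ v) := by
      have := hveq
      rw [Matrix.sub_mulVec, Matrix.smul_mulVec, sub_eq_zero] at this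
      exact this.symm
    set w := Mc *ᵥ v with hw
    have hMcstar : ∀ (u : m → ℂ), Mc *ᵥ (star u) = star (Mc *ᵥ u) := by
      intro u
      funext j
      simp [Matrix.mulVec, dotProduct, hMc, Matrix.map_apply, map_sum, hf,
        Complex.conj_ofReal]
    have hNcstar : ∀ (u : m → ℂ), Nc *ᵥ (star u) = star (Nc *ᵥ u) := by
      intro u
      funext j
      simp [Matrix.mulVec, dotProduct, hNc, Matrix.map_apply, map_sum, hf,
        Complex.conj_ofReal]
    have key1 : star v ⬝ᵥ ((Mcᵀ * Nc) *ᵥ v) = Complex.I * (star w ⬝ᵥ w) := by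
      rw [← Matrix.mulVec_mulVec, hNv, Matrix.mulVec_smul, dotProduct_smul,
        Matrix.dotProduct_mulVec, Matrix.vecMul_transpose, hMcstar, ← hw, smul_eq_mul]
    have key2 : star v ⬝ᵥ ((Ncᵀ * Mc) *ᵥ v) = (- Complex.I) * (star w ⬝ᵥ w) := by
      rw [← Matrix.mulVec_mulVec, ← hw, Matrix.dotProduct_mulVec, Matrix.vecMul_transpose,
        hNcstar, hNv, star_smul, smul_dotProduct, Complex.star_def, Complex.conj_I,
        smul_eq_mul]
    have hs : star w ⬝ᵥ w = 0 := by
      have : Complex.I * (star w ⬝ᵥ w) = (- Complex.I) * (star w ⬝ᵥ w) := by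
        rw [← key1, ← key2, hsymc]
      have h2 : (2 * Complex.I) * (star w ⬝ᵥ w) = 0 := by ring_nf; ring_nf at this; linear_combination this
      have hI : (2 : ℂ) * Complex.I ≠ 0 := by
        simp [Complex.I_ne_zero]
      exact (mul_eq_zero.mp h2).resolve_left hI
    have hw0 : w = 0 := dotProduct_star_self_eq_zero.mp hs
    have hNv0 : Nc *ᵥ v = 0 := by rw [hNv, hw0, smul_zero]
    exact hvne (hker v hw0 hNv0)
  have hset : {t : ℝ | (t • M - N).det = 0} = {t : ℝ | (detP M N).IsRoot t} := by
    ext t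
    simp [Polynomial.IsRoot, detP_eval]
  rw [hset]
  exact Polynomial.finite_setOf_isRoot hq


lemma sub_helper {α : Type*} [AddCommGroup α] {a b c d e f : α}
    (h : b + c = e + f) : a - b - (c - d) = a - e - (f - d) := by
  have h1 : a - b - (c - d) = a + d - (b + c) := by abel
  have h2 : a - e - (f - d) = a + d - (e + f) := by abel
  rw [h1, h2, h]

lemma sub_helper2 {α : Type*} [AddCommGroup α] {a b c d e f : α}
    (h : b + c = e + f) : a - b - c + d = a - e - f + d := by
  have h1 : a - b - c + d = a + d - (b + c) := by abel
  have h2 : a - e - f + d = a + d - (e + f) := by abel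
  rw [h1, h2, h]

lemma fromBlocks_sub' {l m n o α : Type*} [Sub α] (A : Matrix n l α) (B : Matrix n m α)
    (C : Matrix o l α) (D : Matrix o m α) (A' : Matrix n l α) (B' : Matrix n m α)
    (C' : Matrix o l α) (D' : Matrix o m α) :
    Matrix.fromBlocks A B C D - Matrix.fromBlocks A' B' C' D'
      = Matrix.fromBlocks (A - A') (B - B') (C - C') (D - D') := by
  ext i j
  rcases i with i | i <;> rcases j with j | j <;>
    simp [Matrix.fromBlocks, Matrix.sub_apply]

set_option maxHeartbeats 1000000 in
/-- Every symplectic `2n×2n` matrix `S` factors as `S = S₁ S₂` where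
`S₁`, `S₂` are free symplectic matrices (with symmetric `P, Q, P', Q'` and invertible
`L, L'`) satisfying `det(S₁ − I) ≠ 0` and `det(S₂ − I) ≠ 0`. -/
theorem symplectic_factorization_free
    (n : ℕ) (hn : 1 ≤ n)
    (S : Matrix (Fin n ⊕ Fin n) (Fin n ⊕ Fin n) ℝ)
    (hS : S * (Matrix.fromBlocks 0 1 (-1) 0) * Sᵀ = Matrix.fromBlocks 0 1 (-1) 0) :
    ∃ (P Q P' Q' L L' : Matrix (Fin n) (Fin n) ℝ),
      P.IsSymm ∧ Q.IsSymm ∧ P'.IsSymm ∧ Q'.IsSymm ∧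
      IsUnit L.det ∧ IsUnit L'.det ∧
      S = (Matrix.fromBlocks (L⁻¹ * Q) L⁻¹ (P * L⁻¹ * Q - Lᵀ) (L⁻¹ * P)) *
          (Matrix.fromBlocks (L'⁻¹ * Q') L'⁻¹ (P' * L'⁻¹ * Q' - L'ᵀ) (L'⁻¹ * P')) ∧
      ((Matrix.fromBlocks (L⁻¹ * Q) L⁻¹ (P * L⁻¹ * Q - Lᵀ) (L⁻¹ * P)) - 1).det ≠ 0 ∧
      ((Matrix.fromBlocks (L'⁻¹ * Q') L'⁻¹ (P' * L'⁻¹ * Q' - L'ᵀ) (L'⁻¹ * P')) - 1).det ≠ 0 := by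
  classical
  obtain ⟨A, B, C, D, hS0⟩ :
      ∃ A B C D, S = Matrix.fromBlocks A B C D :=
    ⟨S.toBlocks₁₁, S.toBlocks₁₂, S.toBlocks₂₁, S.toBlocks₂₂, (Matrix.fromBlocks_toBlocks S).symm⟩
  set J : Matrix (Fin n ⊕ Fin n) (Fin n ⊕ Fin n) ℝ := Matrix.fromBlocks 0 1 (-1) 0 with hJ
  have hJJ : J * J = -1 := by
    rw [hJ, Matrix.fromBlocks_multiply, ← Matrix.fromBlocks_one]
    rw [show -Matrix.fromBlocks (1 : Matrix (Fin n) (Fin n) ℝ) 0 0 (1 : Matrix (Fin n) (Fin n) ℝ)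
        = Matrix.fromBlocks (-1) (-0) (-0) (-1) from Matrix.fromBlocks_neg _ _ _ _]
    simp
  have hST : Sᵀ = Matrix.fromBlocks Aᵀ Cᵀ Bᵀ Dᵀ := by rw [hS0, Matrix.fromBlocks_transpose]
  have hmul1 : S * J = Matrix.fromBlocks (-B) A (-D) C := by
    rw [hS0, hJ, Matrix.fromBlocks_multiply]
    simp
  -- block identities from S J Sᵀ = J
  have h := hS
  rw [show S * (Matrix.fromBlocks 0 1 (-1) 0) = Matrix.fromBlocks (-B) A (-D) C from hmul1,
    hST, Matrix.fromBlocks_multiply, Matrix.fromBlocks_inj] at h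
  obtain ⟨h11, h12, h21, h22⟩ := h
  rw [neg_mul, neg_add_eq_zero] at h11
  have hc : A * Bᵀ = B * Aᵀ := h11.symm
  rw [neg_mul, neg_add_eq_sub] at h12
  have he : A * Dᵀ - B * Cᵀ = 1 := h12
  rw [neg_mul, neg_add_eq_zero] at h22
  have hd : C * Dᵀ = D * Cᵀ := h22.symm
  -- derive Sᵀ J S = J
  have hSJr : S * (J * Sᵀ * -J) = 1 := by
    rw [show S * (J * Sᵀ * -J) = S * J * Sᵀ * -J by simp only [mul_assoc], hS]
    rw [mul_neg, hJJ, neg_neg]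
  have hSJl : (J * Sᵀ * -J) * S = 1 := mul_eq_one_comm.mp hSJr
  have hS' : Sᵀ * J * S = J := by
    have e0 : -(J * Sᵀ * J * S) = 1 := by
      rw [show -(J * Sᵀ * J * S) = (J * Sᵀ * -J) * S by rw [mul_neg, neg_mul]]
      exact hSJl
    have e1 : J * Sᵀ * J * S = -1 := neg_eq_iff_eq_neg.mp (by rw [e0])
    have e3 : J * (J * Sᵀ * J * S) = J * (-1) := congrArg (J * ·) e1
    rw [mul_neg, mul_one] at e3
    have e4 : J * (J * Sᵀ * J * S) = -(Sᵀ * J * S) := by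
      rw [show J * (J * Sᵀ * J * S) = (J * J) * (Sᵀ * J * S) by simp only [mul_assoc], hJJ,
        neg_mul, one_mul]
    rw [e4] at e3
    exact neg_injective e3
  have hmul2 : Sᵀ * J = Matrix.fromBlocks (-Cᵀ) Aᵀ (-Dᵀ) Bᵀ := by
    rw [hST, hJ, Matrix.fromBlocks_multiply]
    simp
  rw [hmul2, hS0, Matrix.fromBlocks_multiply, hJ, Matrix.fromBlocks_inj] at hS'
  obtain ⟨g11, g12, g21, g22⟩ := hS'
  rw [neg_mul, neg_add_eq_sub] at g12
  have hf : Aᵀ * D - Cᵀ * B = 1 := g12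
  rw [neg_mul, neg_add_eq_zero] at g22
  have ha : Bᵀ * D = Dᵀ * B := g22.symm
  rw [neg_mul] at g21
  have hb : Dᵀ * A - Bᵀ * C = 1 := by
    have h' := congrArg Neg.neg g21
    rw [neg_add, neg_neg, neg_neg, ← sub_eq_add_neg] at h'
    exact h'
  have he' : D * Aᵀ - C * Bᵀ = 1 := by
    have h' := congrArg Matrix.transpose he
    simpa [Matrix.transpose_sub, Matrix.transpose_mul, Matrix.transpose_transpose] using h'
  -- choose p with (p • B - D) invertible
  have hkerBD : ∀ v : (Fin n) → ℂ, (B.map (algebraMap ℝ ℂ)) *ᵥ v = 0 →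
      (D.map (algebraMap ℝ ℂ)) *ᵥ v = 0 → v = 0 := by
    intro v hBv hDv
    have h1 : ((Aᵀ * D - Cᵀ * B).map (algebraMap ℝ ℂ)) *ᵥ v = v := by
      rw [hf, Matrix.map_one _ (map_zero _) (map_one _), Matrix.one_mulVec]
    have h2 : ((Aᵀ * D - Cᵀ * B).map (algebraMap ℝ ℂ)) *ᵥ v = 0 := by
      rw [Matrix.map_sub _ (fun a b => map_sub _ a b), Matrix.map_mul, Matrix.map_mul,
        Matrix.sub_mulVec, ← Matrix.mulVec_mulVec, ← Matrix.mulVec_mulVec, hBv, hDv,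
        Matrix.mulVec_zero, Matrix.mulVec_zero, sub_zero]
    exact h1.symm.trans h2
  obtain ⟨p, hp⟩ : ∃ p : ℝ, (p • B - D).det ≠ 0 := by
    obtain ⟨t, ht⟩ := (finite_bad B D ha hkerBD).infinite_compl.nonempty
    exact ⟨t, ht⟩
  obtain ⟨R, hR⟩ : ∃ R₀ : Matrix (Fin n) (Fin n) ℝ, R₀ = p • B - D := ⟨_, rfl⟩
  have hRdet : IsUnit R.det := isUnit_iff_ne_zero.mpr (by rw [hR]; exact hp)
  obtain ⟨L, hL⟩ : ∃ L₀ : Matrix (Fin n) (Fin n) ℝ, L₀ = Rᵀ := ⟨_, rfl⟩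
  have hLdet : IsUnit L.det := by rw [hL, Matrix.det_transpose]; exact hRdet
  obtain ⟨N, hNdef⟩ : ∃ N₀ : Matrix (Fin n) (Fin n) ℝ, N₀ = L⁻¹ := ⟨_, rfl⟩
  have hNL : N * L = 1 := by rw [hNdef]; exact Matrix.nonsing_inv_mul L hLdet
  have hLN : L * N = 1 := by rw [hNdef]; exact Matrix.mul_nonsing_inv L hLdet
  have hRiR : R⁻¹ * R = 1 := Matrix.nonsing_inv_mul R hRdet
  have hRRi : R * R⁻¹ = 1 := Matrix.mul_nonsing_inv R hRdet
  have hLt : Lᵀ = R := by rw [hL, Matrix.transpose_transpose]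
  have hEB : L * B = Bᵀ * R := by
    rw [hL, hR, Matrix.transpose_sub, Matrix.transpose_smul, sub_mul, mul_sub,
      smul_mul_assoc, mul_smul_comm, ← ha]
  obtain ⟨T, hT⟩ : ∃ T₀ : Matrix (Fin n) (Fin n) ℝ, T₀ = p • A - C := ⟨_, rfl⟩
  obtain ⟨Q', hQ'def⟩ : ∃ Q₀ : Matrix (Fin n) (Fin n) ℝ, Q₀ = R⁻¹ * T := ⟨_, rfl⟩
  have hRQ' : R * Q' = T := by rw [hQ'def, ← mul_assoc, hRRi, one_mul]
  have hLBQ' : L * (B * Q') = Bᵀ * T := by rw [← mul_assoc, hEB, mul_assoc, hRQ']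
  have h2 : L * (B * Q' - A) = 1 := by
    rw [mul_sub, hLBQ', hL, hR, hT, mul_sub, mul_smul_comm, Matrix.transpose_sub,
      Matrix.transpose_smul, sub_mul, smul_mul_assoc]
    rw [show p • (Bᵀ * A) - Bᵀ * C - (p • (Bᵀ * A) - Dᵀ * A) = Dᵀ * A - Bᵀ * C by abel, hb]
  have hBQ' : B * Q' = A + N := by
    have h3 : B * Q' - A = N := by
      calc B * Q' - A = (N * L) * (B * Q' - A) := by rw [hNL, one_mul]
      _ = N * (L * (B * Q' - A)) := by rw [mul_assoc]
      _ = N := by rw [h2, mul_one]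
    have h4 := sub_eq_iff_eq_add.mp h3
    rw [h4, add_comm]
  -- symmetry of Q'
  have hADCB : A * Dᵀ + C * Bᵀ = B * Cᵀ + D * Aᵀ := by
    calc A * Dᵀ + C * Bᵀ = (A * Dᵀ - B * Cᵀ) + (B * Cᵀ + C * Bᵀ) := by abel
    _ = 1 + (B * Cᵀ + C * Bᵀ) := by rw [he]
    _ = (D * Aᵀ - C * Bᵀ) + (B * Cᵀ + C * Bᵀ) := by rw [he']
    _ = B * Cᵀ + D * Aᵀ := by abel
  have hTL : T * L = R * Tᵀ := by
    have expand1 : T * L = (p*p) • (A * Bᵀ) - p • (A * Dᵀ) - p • (C * Bᵀ) + C * Dᵀ := by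
      rw [hT, hL, hR]
      simp only [Matrix.transpose_sub, Matrix.transpose_smul, mul_sub, sub_mul,
        smul_mul_assoc, mul_smul_comm, smul_sub, smul_smul]
      abel
    have expand2 : R * Tᵀ = (p*p) • (B * Aᵀ) - p • (B * Cᵀ) - p • (D * Aᵀ) + D * Cᵀ := by
      rw [hT, hR]
      simp only [Matrix.transpose_sub, Matrix.transpose_smul, mul_sub, sub_mul,
        smul_mul_assoc, mul_smul_comm, smul_sub, smul_smul]
      abel
    rw [expand1, expand2, hc, hd]
    exact sub_helper2 (by rw [← smul_add, ← smul_add, hADCB])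
  have hQ'symeq : Q'ᵀ = Q' := by
    rw [hQ'def, Matrix.transpose_mul, Matrix.transpose_nonsing_inv]
    have e : Tᵀ = R⁻¹ * (T * L) := by rw [hTL, ← mul_assoc, hRiR, one_mul]
    rw [e, ← hL, ← hNdef]
    rw [show R⁻¹ * (T * L) * N = R⁻¹ * (T * (L * N)) by simp only [mul_assoc], hLN, mul_one]
  have hQ'sym : Q'.IsSymm := hQ'symeq
  -- choose p'
  obtain ⟨K, hK⟩ : ∃ K₀ : Matrix (Fin n) (Fin n) ℝ, K₀ = L * B - R - L := ⟨_, rfl⟩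
  have hKsym : (K + p • 1)ᵀ = K + p • 1 := by
    rw [hK]
    simp only [Matrix.transpose_add, Matrix.transpose_sub, Matrix.transpose_mul,
      Matrix.transpose_smul, Matrix.transpose_one, hLt, ← hL]
    rw [← hEB]
    abel
  have htrivker : ∀ (Nmat : Matrix (Fin n) (Fin n) ℝ),
      ∀ v : (Fin n) → ℂ, ((1 : Matrix (Fin n) (Fin n) ℝ).map (algebraMap ℝ ℂ)) *ᵥ v = 0 →
      (Nmat.map (algebraMap ℝ ℂ)) *ᵥ v = 0 → v = 0 := by
    intro Nmat v h1 _
    rwa [Matrix.map_one _ (map_zero _) (map_one _), Matrix.one_mulVec] at h1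
  have hbad1 := finite_bad (1 : Matrix (Fin n) (Fin n) ℝ) ((2:ℝ) • 1 - Q')
    (by rw [Matrix.transpose_one, one_mul, mul_one, Matrix.transpose_sub, Matrix.transpose_smul,
      Matrix.transpose_one, hQ'symeq]) (htrivker _)
  have hbad2 := finite_bad (1 : Matrix (Fin n) (Fin n) ℝ) (K + p • 1)
    (by rw [Matrix.transpose_one, one_mul, mul_one, hKsym]) (htrivker _)
  obtain ⟨p', hp'1, hp'2⟩ : ∃ p' : ℝ,
      (p' • (1 : Matrix (Fin n) (Fin n) ℝ) - ((2:ℝ) • 1 - Q')).det ≠ 0 ∧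
      (p' • (1 : Matrix (Fin n) (Fin n) ℝ) - (K + p • 1)).det ≠ 0 := by
    obtain ⟨t, ht⟩ := (hbad1.union hbad2).infinite_compl.nonempty
    rw [Set.mem_compl_iff, Set.mem_union] at ht
    push_neg at ht
    obtain ⟨ht1, ht2⟩ := ht
    exact ⟨t, by simpa using ht1, by simpa using ht2⟩
  have hdet1 : (Q' + (p' - 2) • (1 : Matrix (Fin n) (Fin n) ℝ)).det ≠ 0 := by
    rw [show Q' + (p' - 2) • (1 : Matrix (Fin n) (Fin n) ℝ)
        = p' • 1 - ((2:ℝ) • 1 - Q') by rw [sub_smul]; abel]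
    exact hp'1
  have hdet2 : (K + (p - p') • (1 : Matrix (Fin n) (Fin n) ℝ)).det ≠ 0 := by
    rw [show K + (p - p') • (1 : Matrix (Fin n) (Fin n) ℝ)
        = -(p' • 1 - (K + p • 1)) by rw [sub_smul]; abel, Matrix.det_neg]
    intro hcontra
    rcases mul_eq_zero.mp hcontra with h' | h'
    · exact pow_ne_zero _ (by norm_num : (-1:ℝ) ≠ 0) h'
    · exact hp'2 h'
  obtain ⟨QQ, hQQ⟩ : ∃ W₀ : Matrix (Fin n) (Fin n) ℝ, W₀ = L * B - p' • 1 := ⟨_, rfl⟩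
  have hNQQ : N * QQ = B - p' • N := by
    rw [hQQ, mul_sub, ← mul_assoc, hNL, one_mul, mul_smul_comm, mul_one]
  have hF1 : Matrix.fromBlocks (L⁻¹ * QQ) L⁻¹
      ((p • (1 : Matrix (Fin n) (Fin n) ℝ)) * L⁻¹ * QQ - Lᵀ) (L⁻¹ * (p • 1))
      = Matrix.fromBlocks (N * QQ) N (p • (N * QQ) - R) (p • N) := by
    rw [← hNdef, hLt, smul_mul_assoc, one_mul, smul_mul_assoc, mul_smul_comm, mul_one]
  have hF2 : Matrix.fromBlocks ((1 : Matrix (Fin n) (Fin n) ℝ)⁻¹ * Q')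
      (1 : Matrix (Fin n) (Fin n) ℝ)⁻¹
      ((p' • (1 : Matrix (Fin n) (Fin n) ℝ)) * (1 : Matrix (Fin n) (Fin n) ℝ)⁻¹ * Q'
        - (1 : Matrix (Fin n) (Fin n) ℝ)ᵀ)
      ((1 : Matrix (Fin n) (Fin n) ℝ)⁻¹ * (p' • 1)) =
      Matrix.fromBlocks Q' 1 (p' • Q' - 1) (p' • 1) := by
    simp
  refine ⟨p • 1, QQ, p' • 1, Q', L, 1, ?_, ?_, ?_, hQ'sym, hLdet, by simp, ?_, ?_, ?_⟩
  · show (p • (1 : Matrix (Fin n) (Fin n) ℝ))ᵀ = p • 1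
    rw [Matrix.transpose_smul, Matrix.transpose_one]
  · show QQᵀ = QQ
    rw [hQQ, Matrix.transpose_sub, Matrix.transpose_mul, Matrix.transpose_smul,
      Matrix.transpose_one, hLt, ← hEB]
  · show (p' • (1 : Matrix (Fin n) (Fin n) ℝ))ᵀ = p' • 1
    rw [Matrix.transpose_smul, Matrix.transpose_one]
  · -- the factorization S = F₁ * F₂
    rw [hF1, hF2, hS0, Matrix.fromBlocks_multiply, Matrix.fromBlocks_inj]
    have hTLb : N * QQ * Q' + N * (p' • Q' - 1) = A := by
      rw [show N * QQ * Q' = (N * QQ) * Q' from rfl, hNQQ, sub_mul, smul_mul_assoc,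
        mul_sub, mul_smul_comm, mul_one, hBQ']
      abel
    have hTRb : N * QQ * 1 + N * (p' • 1) = B := by
      rw [mul_one, hNQQ, mul_smul_comm, mul_one]
      abel
    have hBLb : (p • (N * QQ) - R) * Q' + (p • N) * (p' • Q' - 1) = C := by
      rw [hNQQ]
      simp only [sub_mul, smul_mul_assoc, mul_sub, mul_smul_comm, mul_one, smul_sub]
      rw [hBQ', hRQ', hT]
      simp only [smul_add, smul_sub, smul_smul, mul_comm p' p]
      abel
    have hBRb : (p • (N * QQ) - R) * 1 + (p • N) * (p' • 1) = D := by
      rw [mul_one, hNQQ, smul_mul_assoc, mul_smul_comm, mul_one, hR]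
      simp only [smul_sub]
      abel
    exact ⟨hTLb.symm, hTRb.symm, hBLb.symm, hBRb.symm⟩
  · -- det (F₁ - 1) ≠ 0
    rw [hF1]
    intro hdd
    obtain ⟨v, hvne, hveq⟩ := Matrix.exists_mulVec_eq_zero_iff.mpr hdd
    set x : Fin n → ℝ := v ∘ Sum.inl with hx
    set y : Fin n → ℝ := v ∘ Sum.inr with hy
    have hv : v = Sum.elim x y := by funext i; cases i <;> rfl
    rw [show (1 : Matrix (Fin n ⊕ Fin n) (Fin n ⊕ Fin n) ℝ)
        = Matrix.fromBlocks 1 0 0 1 from Matrix.fromBlocks_one.symm,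
      fromBlocks_sub', hv, Matrix.fromBlocks_mulVec] at hveq
    have eI : (N * QQ - 1) *ᵥ x + (N - 0) *ᵥ y = 0 := by
      funext i; exact congrFun hveq (Sum.inl i)
    have eII : (p • (N * QQ) - R - 0) *ᵥ x + (p • N - 1) *ᵥ y = 0 := by
      funext i; exact congrFun hveq (Sum.inr i)
    rw [sub_zero] at eI eII
    -- apply L to eI
    have eI0 : L *ᵥ ((N * QQ - 1) *ᵥ x) + L *ᵥ (N *ᵥ y) = 0 := by
      rw [← Matrix.mulVec_add, eI, Matrix.mulVec_zero]
    rw [Matrix.mulVec_mulVec, Matrix.mulVec_mulVec, hLN,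
      show L * (N * QQ - 1) = QQ - L by rw [mul_sub, ← mul_assoc, hLN, one_mul, mul_one],
      Matrix.one_mulVec] at eI0
    have hyx : y = (L - QQ) *ᵥ x := by
      have h5 := add_eq_zero_iff_eq_neg.mp eI0
      have h6 : y = -((QQ - L) *ᵥ x) := by rw [h5, neg_neg]
      rw [h6, ← Matrix.neg_mulVec, neg_sub]
    have eII0 : L *ᵥ ((p • (N * QQ) - R) *ᵥ x) + L *ᵥ ((p • N - 1) *ᵥ y) = 0 := by
      rw [← Matrix.mulVec_add, eII, Matrix.mulVec_zero]
    rw [Matrix.mulVec_mulVec, Matrix.mulVec_mulVec,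
      show L * (p • (N * QQ) - R) = p • QQ - L * R by
        rw [mul_sub, mul_smul_comm, ← mul_assoc, hLN, one_mul],
      show L * (p • N - 1) = p • 1 - L by rw [mul_sub, mul_smul_comm, hLN, mul_one]] at eII0
    have eIII : (L * (K + (p - p') • 1)) *ᵥ x = 0 := by
      have expand : L * (K + (p - p') • (1 : Matrix (Fin n) (Fin n) ℝ))
          = (p • QQ - L * R) + (p • 1 - L) * (L - QQ) := by
        rw [hK, hQQ]
        simp only [mul_add, mul_sub, sub_mul, smul_mul_assoc, mul_smul_comm, mul_one,
          one_mul, smul_sub, smul_add, sub_smul, smul_smul, mul_comm p' p]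
        abel
      rw [expand, Matrix.add_mulVec, ← Matrix.mulVec_mulVec, ← hyx]
      exact eII0
    have hx0 : x = 0 := by
      have hKu : IsUnit (K + (p - p') • (1 : Matrix (Fin n) (Fin n) ℝ)).det :=
        isUnit_iff_ne_zero.mpr hdet2
      have e6 : (K + (p - p') • (1 : Matrix (Fin n) (Fin n) ℝ)) *ᵥ x = 0 := by
        have h7 := congrArg (fun u => N *ᵥ u) eIII
        simpa [Matrix.mulVec_mulVec, ← mul_assoc, hNL, one_mul, Matrix.mulVec_zero] using h7
      have h8 := congrArg
        (fun u => (K + (p - p') • (1 : Matrix (Fin n) (Fin n) ℝ))⁻¹ *ᵥ u) e6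
      simpa [Matrix.mulVec_mulVec, Matrix.nonsing_inv_mul _ hKu, Matrix.mulVec_zero] using h8
    have hy0 : y = 0 := by rw [hyx, hx0, Matrix.mulVec_zero]
    apply hvne
    rw [hv, hx0, hy0]
    funext i; cases i <;> rfl
  · -- det (F₂ - 1) ≠ 0
    rw [hF2]
    intro hdd
    obtain ⟨v, hvne, hveq⟩ := Matrix.exists_mulVec_eq_zero_iff.mpr hdd
    set x : Fin n → ℝ := v ∘ Sum.inl with hx
    set y : Fin n → ℝ := v ∘ Sum.inr with hy
    have hv : v = Sum.elim x y := by funext i; cases i <;> rfl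
    rw [show (1 : Matrix (Fin n ⊕ Fin n) (Fin n ⊕ Fin n) ℝ)
        = Matrix.fromBlocks 1 0 0 1 from Matrix.fromBlocks_one.symm,
      fromBlocks_sub', hv, Matrix.fromBlocks_mulVec] at hveq
    have eI : (Q' - 1) *ᵥ x + (1 - 0) *ᵥ y = 0 := by
      funext i; exact congrFun hveq (Sum.inl i)
    have eII : (p' • Q' - 1 - 0) *ᵥ x + (p' • 1 - 1) *ᵥ y = 0 := by
      funext i; exact congrFun hveq (Sum.inr i)
    rw [sub_zero, Matrix.one_mulVec] at eI
    rw [sub_zero] at eII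
    have hyx : y = x - Q' *ᵥ x := by
      have h5 := add_eq_zero_iff_eq_neg.mp eI
      have h6 : y = -((Q' - 1) *ᵥ x) := by rw [h5, neg_neg]
      rw [h6, Matrix.sub_mulVec, Matrix.one_mulVec, neg_sub]
    have ekey : (Q' + (p' - 2) • 1) *ᵥ x = 0 := by
      rw [Matrix.add_mulVec, Matrix.smul_mulVec, Matrix.one_mulVec]
      rw [Matrix.sub_mulVec, Matrix.smul_mulVec, Matrix.sub_mulVec,
        Matrix.smul_mulVec, Matrix.one_mulVec, Matrix.one_mulVec, hyx] at eII
      rw [← eII]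
      module
    have hx0 : x = 0 := by
      have hu : IsUnit (Q' + (p' - 2) • (1 : Matrix (Fin n) (Fin n) ℝ)).det :=
        isUnit_iff_ne_zero.mpr hdet1
      have h8 := congrArg (fun u => (Q' + (p' - 2) • (1 : Matrix (Fin n) (Fin n) ℝ))⁻¹ *ᵥ u) ekey
      simpa [Matrix.mulVec_mulVec, Matrix.nonsing_inv_mul _ hu, Matrix.mulVec_zero] using h8
    have hy0 : y = 0 := by rw [hyx, hx0, Matrix.mulVec_zero]; simp
    apply hvne
    rw [hv, hx0, hy0]
    funext i; cases i <;> rfl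
end

section
/- Let n ≥ 1 and ħ > 0, and let a_σ : ℝ^{2n} → ℂ be integrable (a_σ ∈ L¹(ℝ^{2n})). For a Schwartz function f on ℝⁿ define the Weyl-type operator Âf(x) = (2πħ)^{−n} ∫_{ℝ^{2n}} a_σ(z₀) (T̂(z₀)f)(x) dz₀, and for a bounded continuous function F on ℝ^{2n} define the Bopp-type operator ÃF(z) = (2πħ)^{−n} ∫_{ℝ^{2n}} a_σ(z₀) (T̃(z₀)F)(z) dz₀ (both integrals converge absolutely). Then for all Schwartz functions f, g on ℝⁿ and every z ∈ ℝ^{2n}, Ã(W(f,g))(z) = W(Âf, g)(z). -/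
open Matrix MeasureTheory Real

/-! Each `T̂(z₀)` is intertwined with `T̃(z₀)` by the cross-Wigner transform,
`W(T̂(z₀)f, g) = T̃(z₀) W(f,g)`, which is a change of variables `y ↦ y + x₀` in the Wigner
integral. Integrating this identity against `a_σ(z₀)` gives the theorem once the `z₀`-integral
is moved inside `W(·, g)`; Fubini applies because `T̂(z₀)f` is bounded uniformly in `z₀`, while
`a_σ` and `g` are integrable. -/

/-- The standard symplectic form `σ(z,z') = (Jz)·z'` on `ℝ²ⁿ = (Fin n ⊕ Fin n) → ℝ`. -/
noncomputable def sympForm {n : ℕ} (z z' : Fin n ⊕ Fin n → ℝ) : ℝ :=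
  ((Matrix.fromBlocks 0 1 (-1) 0 : Matrix (Fin n ⊕ Fin n) (Fin n ⊕ Fin n) ℝ) *ᵥ z) ⬝ᵥ z'

/-- The phase-space shift `T̃(z₀)F(z) = e^{−(i/ℏ)σ(z,z₀)} F(z − z₀/2)`. -/
noncomputable def phaseShift {n : ℕ} (ℏ : ℝ) (z₀ : Fin n ⊕ Fin n → ℝ)
    (F : (Fin n ⊕ Fin n → ℝ) → ℂ) : (Fin n ⊕ Fin n → ℝ) → ℂ := fun z =>
  Complex.exp (-(Complex.I / ℏ) * (sympForm z z₀ : ℝ)) * F (z - (1 / 2 : ℝ) • z₀)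

/-- The Heisenberg–Weyl operator
`T̂(z₀)f(x) = e^{(i/ℏ)(p₀·x − p₀·x₀/2)} f(x − x₀)`, where `x₀ = z₀ ∘ Sum.inl`,
`p₀ = z₀ ∘ Sum.inr`. -/
noncomputable def heisenbergWeyl {n : ℕ} (ℏ : ℝ) (z₀ : Fin n ⊕ Fin n → ℝ)
    (f : (Fin n → ℝ) → ℂ) : (Fin n → ℝ) → ℂ := fun x =>
  Complex.exp ((Complex.I / ℏ) *
      (((z₀ ∘ Sum.inr) ⬝ᵥ x - (1 / 2) * ((z₀ ∘ Sum.inr) ⬝ᵥ (z₀ ∘ Sum.inl)) : ℝ))) *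
    f (x - (z₀ ∘ Sum.inl))

/-- The cross-Wigner transform. -/
noncomputable def crossWigner {n : ℕ} (ℏ : ℝ) (f g : (Fin n → ℝ) → ℂ)
    (z : Fin n ⊕ Fin n → ℝ) : ℂ :=
  (((2 * π * ℏ) ^ (-(n : ℝ)) : ℝ) : ℂ) *
    ∫ y : Fin n → ℝ, Complex.exp (-(Complex.I / ℏ) * ((z ∘ Sum.inr) ⬝ᵥ y : ℝ)) *
      f ((z ∘ Sum.inl) + (1 / 2 : ℝ) • y) *
      (starRingEnd ℂ) (g ((z ∘ Sum.inl) - (1 / 2 : ℝ) • y))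

/-- The Weyl-type operator `Âf(x) = (2πℏ)^{−n} ∫ a_σ(z₀) T̂(z₀)f(x) dz₀`. -/
noncomputable def weylOp {n : ℕ} (ℏ : ℝ) (aσ : (Fin n ⊕ Fin n → ℝ) → ℂ)
    (f : (Fin n → ℝ) → ℂ) : (Fin n → ℝ) → ℂ := fun x =>
  (((2 * π * ℏ) ^ (-(n : ℝ)) : ℝ) : ℂ) *
    ∫ z₀ : Fin n ⊕ Fin n → ℝ, aσ z₀ * heisenbergWeyl ℏ z₀ f x

/-- The Bopp-type operator `ÃF(z) = (2πℏ)^{−n} ∫ a_σ(z₀) T̃(z₀)F(z) dz₀`. -/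
noncomputable def boppOp {n : ℕ} (ℏ : ℝ) (aσ : (Fin n ⊕ Fin n → ℝ) → ℂ)
    (F : (Fin n ⊕ Fin n → ℝ) → ℂ) : (Fin n ⊕ Fin n → ℝ) → ℂ := fun z =>
  (((2 * π * ℏ) ^ (-(n : ℝ)) : ℝ) : ℂ) *
    ∫ z₀ : Fin n ⊕ Fin n → ℝ, aσ z₀ * phaseShift ℏ z₀ F z

section

variable {n : ℕ}

lemma sympForm_eq (z z' : Fin n ⊕ Fin n → ℝ) :
    sympForm z z' = (z ∘ Sum.inr) ⬝ᵥ (z' ∘ Sum.inl) - (z ∘ Sum.inl) ⬝ᵥ (z' ∘ Sum.inr) := by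
  rw [sympForm, fromBlocks_mulVec, ← Sum.elim_comp_inl_inr z', sumElim_dotProduct_sumElim]
  simp [neg_mulVec, neg_dotProduct, sub_eq_add_neg]

lemma norm_exp_I_mul_ofReal_div (ℏ r : ℝ) : ‖Complex.exp (Complex.I / ℏ * r)‖ = 1 := by
  rw [show Complex.I / ℏ * r = ((r / ℏ : ℝ) : ℂ) * Complex.I by push_cast; ring,
    Complex.norm_exp_ofReal_mul_I]

lemma norm_exp_neg_I_mul_ofReal_div (ℏ r : ℝ) : ‖Complex.exp (-(Complex.I / ℏ) * r)‖ = 1 := by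
  simpa [neg_mul, ← mul_neg] using norm_exp_I_mul_ofReal_div ℏ (-r)

lemma norm_heisenbergWeyl (ℏ : ℝ) (z₀ : Fin n ⊕ Fin n → ℝ) (f : (Fin n → ℝ) → ℂ)
    (x : Fin n → ℝ) : ‖heisenbergWeyl ℏ z₀ f x‖ = ‖f (x - z₀ ∘ Sum.inl)‖ := by
  rw [heisenbergWeyl, norm_mul, norm_exp_I_mul_ofReal_div, one_mul]

lemma continuous_heisenbergWeyl (ℏ : ℝ) {f : (Fin n → ℝ) → ℂ} (hf : Continuous f) :
    Continuous fun q : (Fin n ⊕ Fin n → ℝ) × (Fin n → ℝ) => heisenbergWeyl ℏ q.1 f q.2 := by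
  unfold heisenbergWeyl
  fun_prop

lemma crossWigner_const_mul_left (ℏ : ℝ) (c : ℂ) (f g : (Fin n → ℝ) → ℂ)
    (z : Fin n ⊕ Fin n → ℝ) :
    crossWigner ℏ (fun x => c * f x) g z = c * crossWigner ℏ f g z := by
  simp only [crossWigner, ← integral_const_mul]
  congr 1 with y
  ac_rfl

lemma crossWigner_heisenbergWeyl (ℏ : ℝ) (f g : (Fin n → ℝ) → ℂ)
    (z₀ z : Fin n ⊕ Fin n → ℝ) :
    crossWigner ℏ (heisenbergWeyl ℏ z₀ f) g z = phaseShift ℏ z₀ (crossWigner ℏ f g) z := by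
  simp only [crossWigner, heisenbergWeyl, phaseShift, sympForm_eq]
  rw [show (z - (1 / 2 : ℝ) • z₀) ∘ Sum.inl = z ∘ Sum.inl - (1 / 2 : ℝ) • z₀ ∘ Sum.inl from rfl,
    show (z - (1 / 2 : ℝ) • z₀) ∘ Sum.inr = z ∘ Sum.inr - (1 / 2 : ℝ) • z₀ ∘ Sum.inr from rfl]
  set x := z ∘ Sum.inl
  set p := z ∘ Sum.inr
  set x₀ := z₀ ∘ Sum.inl
  set p₀ := z₀ ∘ Sum.inr
  conv_rhs => rw [mul_left_comm, ← integral_const_mul]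
  rw [← integral_add_right_eq_self _ x₀]
  congr 1
  congr 1 with u
  have hplus : x + (1 / 2 : ℝ) • (u + x₀) - x₀ = x - (1 / 2 : ℝ) • x₀ + (1 / 2 : ℝ) • u := by
    module
  have hminus : x - (1 / 2 : ℝ) • (u + x₀) = x - (1 / 2 : ℝ) • x₀ - (1 / 2 : ℝ) • u := by
    module
  have hphase : -(p ⬝ᵥ (u + x₀)) + (p₀ ⬝ᵥ (x + (1 / 2 : ℝ) • (u + x₀)) - 1 / 2 * (p₀ ⬝ᵥ x₀))
      = -(p ⬝ᵥ x₀ - x ⬝ᵥ p₀) - (p - (1 / 2 : ℝ) • p₀) ⬝ᵥ u := by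
    simp only [dotProduct_add, sub_dotProduct, dotProduct_smul, smul_dotProduct, smul_eq_mul,
      dotProduct_comm x p₀]
    ring
  have hexp : Complex.exp (-(Complex.I / ℏ) * ↑(p ⬝ᵥ (u + x₀))) *
        Complex.exp (Complex.I / ℏ * ↑(p₀ ⬝ᵥ (x + (1 / 2 : ℝ) • (u + x₀)) - 1 / 2 * p₀ ⬝ᵥ x₀))
      = Complex.exp (-(Complex.I / ℏ) * ↑(p ⬝ᵥ x₀ - x ⬝ᵥ p₀)) *
        Complex.exp (-(Complex.I / ℏ) * ↑((p - (1 / 2 : ℝ) • p₀) ⬝ᵥ u)) := by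
    rw [← Complex.exp_add, ← Complex.exp_add]
    congr 1
    have := congrArg (fun r : ℝ => (r : ℂ)) hphase
    push_cast at this ⊢
    linear_combination Complex.I / ℏ * this
  rw [hplus, hminus]
  linear_combination (f (x - (1 / 2 : ℝ) • x₀ + (1 / 2 : ℝ) • u) *
    (starRingEnd ℂ) (g (x - (1 / 2 : ℝ) • x₀ - (1 / 2 : ℝ) • u))) * hexp

lemma crossWigner_integral_left {α : Type*} [MeasurableSpace α] {μ : Measure α} [SFinite μ]
    (ℏ : ℝ) {a : α → ℂ} (ha : Integrable a μ) {F : α → (Fin n → ℝ) → ℂ}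
    (hF : StronglyMeasurable (Function.uncurry F)) {M : ℝ} (hFM : ∀ w x, ‖F w x‖ ≤ M)
    {g : (Fin n → ℝ) → ℂ} (hg : Integrable g) (z : Fin n ⊕ Fin n → ℝ) :
    ∫ w, a w * crossWigner ℏ (F w) g z ∂μ =
      crossWigner ℏ (fun x => ∫ w, a w * F w x ∂μ) g z := by
  set C : ℂ := (((2 * π * ℏ) ^ (-(n : ℝ)) : ℝ) : ℂ)
  set x := z ∘ Sum.inl
  set e : (Fin n → ℝ) → ℂ := fun y => Complex.exp (-(Complex.I / ℏ) * ((z ∘ Sum.inr) ⬝ᵥ y : ℝ))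
  set G : (Fin n → ℝ) → ℂ := fun y => (starRingEnd ℂ) (g (x - (1 / 2 : ℝ) • y))
  set K : (Fin n → ℝ) → α → ℂ := fun y w => e y * (a w * F w (x + (1 / 2 : ℝ) • y)) * G y
  have hgx : Integrable (fun y : Fin n → ℝ => g (x - (1 / 2 : ℝ) • y)) :=
    (hg.comp_sub_left x).comp_smul (by norm_num)
  have hK_meas : AEStronglyMeasurable (Function.uncurry K) (volume.prod μ) := by
    have he : Continuous e := by fun_prop
    have hFx : StronglyMeasurable fun q : (Fin n → ℝ) × α => F q.2 (x + (1 / 2 : ℝ) • q.1) :=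
      hF.comp_measurable (g := fun q : (Fin n → ℝ) × α => (q.2, x + (1 / 2 : ℝ) • q.1))
        (by fun_prop)
    exact (he.aestronglyMeasurable.comp_fst.mul (ha.1.comp_snd.mul hFx.aestronglyMeasurable)).mul
      (Complex.continuous_conj.comp_aestronglyMeasurable hgx.1).comp_fst
  have hK : Integrable (Function.uncurry K) (volume.prod μ) := by
    refine ((hgx.norm.const_mul M).mul_prod ha.norm).mono' hK_meas (.of_forall fun q => ?_)
    simp only [Function.uncurry, K, e, G, norm_mul, norm_exp_neg_I_mul_ofReal_div, RCLike.norm_conj]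
    have := mul_le_mul_of_nonneg_left (hFM q.2 (x + (1 / 2 : ℝ) • q.1))
      (mul_nonneg (norm_nonneg (a q.2)) (norm_nonneg (g (x - (1 / 2 : ℝ) • q.1))))
    linarith
  calc ∫ w, a w * crossWigner ℏ (F w) g z ∂μ = C * ∫ w, (∫ y, K y w) ∂μ := by
        simp only [crossWigner, ← integral_const_mul]
        congr 1 with w
        congr 1 with y
        ring
    _ = C * ∫ y, ∫ w, K y w ∂μ := by rw [integral_integral_swap hK]
    _ = C * ∫ y, e y * (∫ w, a w * F w (x + (1 / 2 : ℝ) • y) ∂μ) * G y := by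
        simp only [K, integral_mul_const, integral_const_mul]
    _ = crossWigner ℏ (fun x => ∫ w, a w * F w x ∂μ) g z := rfl

end

theorem bopp_weyl_intertwine_general
    (n : ℕ) (ℏ : ℝ)
    (aσ : (Fin n ⊕ Fin n → ℝ) → ℂ)
    (haσ : Integrable aσ (volume : Measure (Fin n ⊕ Fin n → ℝ)))
    (f g : SchwartzMap (Fin n → ℝ) ℂ) (z : Fin n ⊕ Fin n → ℝ) :
    boppOp ℏ aσ (crossWigner ℏ ⇑f ⇑g) z = crossWigner ℏ (weylOp ℏ aσ ⇑f) ⇑g z := by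
  have hbound (z₀ : Fin n ⊕ Fin n → ℝ) (x : Fin n → ℝ) :
      ‖heisenbergWeyl ℏ z₀ f x‖ ≤ SchwartzMap.seminorm ℂ 0 0 f := by
    rw [norm_heisenbergWeyl]
    exact SchwartzMap.norm_le_seminorm ℂ f _
  have hmeas : StronglyMeasurable (Function.uncurry fun z₀ => heisenbergWeyl ℏ z₀ f) :=
    (continuous_heisenbergWeyl ℏ f.continuous).stronglyMeasurable
  calc boppOp ℏ aσ (crossWigner ℏ f g) z
      = _ * ∫ z₀, aσ z₀ * crossWigner ℏ (heisenbergWeyl ℏ z₀ f) g z := by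
        simp only [boppOp, crossWigner_heisenbergWeyl]; rfl
    _ = _ * crossWigner ℏ (fun x => ∫ z₀, aσ z₀ * heisenbergWeyl ℏ z₀ f x) g z := by
        rw [crossWigner_integral_left ℏ haσ hmeas hbound g.integrable]
    _ = crossWigner ℏ (weylOp ℏ aσ f) g z := (crossWigner_const_mul_left ..).symm

/-- For integrable twisted symbol `a_σ ∈ L¹(ℝ²ⁿ)` and Schwartz `f, g`,
the Bopp operator and the Weyl operator are intertwined by the cross-Wigner transform:
`Ã(W(f,g))(z) = W(Âf, g)(z)` for every `z`. -/
theorem bopp_weyl_intertwine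
    (n : ℕ) (hn : 1 ≤ n) (ℏ : ℝ) (hℏ : 0 < ℏ)
    (aσ : (Fin n ⊕ Fin n → ℝ) → ℂ)
    (haσ : Integrable aσ (volume : Measure (Fin n ⊕ Fin n → ℝ)))
    (f g : SchwartzMap (Fin n → ℝ) ℂ) (z : Fin n ⊕ Fin n → ℝ) :
    boppOp ℏ aσ (crossWigner ℏ ⇑f ⇑g) z = crossWigner ℏ (weylOp ℏ aσ ⇑f) ⇑g z :=
  bopp_weyl_intertwine_general n ℏ aσ haσ f g z
end
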